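/- Let D be a τ-atomic integral domain with τ symmetric, refinable, and associate preserving. Then D is a τ-finite factorization domain if and only if G_τ(x) is a finite graph for every x ∈ D^#. -/

import Mathlib

/-- `a` is a nonzero nonunit, i.e. an element of `D^#`. -/
def NzNonunit {D : Type*} [CommRing D] (a : D) : Prop := a ≠ 0 ∧ ¬ IsUnit a

/-- `l` is the list of factors of a `τ`-factorization of `a`:
`a = λ * l.prod` for a unit `λ`, the factors are nonzero nonunits and pairwise `τ`-related. -/
def TauFact {D : Type*} [CommRing D] (τ : D → D → Prop) (l : List D) (a : D) : Prop :=
  l ≠ [] ∧ (∀ b ∈ l, NzNonunit b) ∧ l.Pairwise τ ∧ ∃ u : Dˣ, a = (u : D) * l.prod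

/-- `b` τ-divides `a`: `b` occurs as a factor in some τ-factorization of `a`. -/
def TauDvd {D : Type*} [CommRing D] (τ : D → D → Prop) (b a : D) : Prop :=
  ∃ l, TauFact τ l a ∧ b ∈ l

/-- `a` is τ-irreducible (a τ-atom): all its τ-factorizations are trivial. -/
def TauIrred {D : Type*} [CommRing D] (τ : D → D → Prop) (a : D) : Prop :=
  NzNonunit a ∧ ∀ l, TauFact τ l a → l.length = 1

/-- `l` is a τ-atomic factorization of `a`. -/
def TauAtomicFact {D : Type*} [CommRing D] (τ : D → D → Prop) (l : List D) (a : D) : Prop :=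
  TauFact τ l a ∧ ∀ b ∈ l, TauIrred τ b

/-- `D` is τ-atomic: every nonzero nonunit has a τ-atomic factorization. -/
def TauAtomic {D : Type*} [CommRing D] (τ : D → D → Prop) : Prop :=
  ∀ a : D, NzNonunit a → ∃ l, TauAtomicFact τ l a

def TauSymm {D : Type*} [CommRing D] (τ : D → D → Prop) : Prop :=
  ∀ a b, τ a b → τ b a

/-- τ is associate preserving. -/
def TauAssocPres {D : Type*} [CommRing D] (τ : D → D → Prop) : Prop :=
  ∀ a b b' : D, τ a b → Associated b b' → τ a b'

/-- τ is refinable: replacing each factor of a τ-factorization by a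
τ-factorization of it again yields a τ-factorization. -/
def TauRefinable {D : Type*} [CommRing D] (τ : D → D → Prop) : Prop :=
  ∀ (a : D) (l : List D) (F : List (List D)),
    TauFact τ l a → List.Forall₂ (fun b m => TauFact τ m b) l F →
    TauFact τ F.flatten a

/-- `a` is a vertex of the τ-irreducible divisor graph `G_τ(x)`. -/
def GVert {D : Type*} [CommRing D] (τ : D → D → Prop) (x a : D) : Prop :=
  TauIrred τ a ∧ TauDvd τ a x

/-- `a` and `b` are adjacent (distinct, i.e. non-associated, vertices joined by an edge)
in `G_τ(x)`: some τ-factorization of `x` contains associates of both. -/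
def GAdj {D : Type*} [CommRing D] (τ : D → D → Prop) (x a b : D) : Prop :=
  GVert τ x a ∧ GVert τ x b ∧ ¬ Associated a b ∧
  ∃ l, TauFact τ l x ∧ (∃ a' ∈ l, Associated a a') ∧ (∃ b' ∈ l, Associated b b')

/-- `G_τ(x)` is connected (vertices are taken up to associates). -/
def GConnected {D : Type*} [CommRing D] (τ : D → D → Prop) (x : D) : Prop :=
  ∀ a b, GVert τ x a → GVert τ x b →
    Relation.ReflTransGen (fun u v => GAdj τ x u v ∨ Associated u v) a b

/-- The reduced graph `G̅_τ(x)` (loops deleted) is connected; loops do not affect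
connectivity, so this is connectivity with respect to the same adjacency relation. -/
def GBarConnected {D : Type*} [CommRing D] (τ : D → D → Prop) (x : D) : Prop :=
  ∀ a b, GVert τ x a → GVert τ x b →
    Relation.ReflTransGen (fun u v => GAdj τ x u v ∨ Associated u v) a b

/-- `G_τ(x)` is a pseudoclique: any two non-associated vertices are adjacent.
(Equivalently, the reduced graph `G̅_τ(x)` is a clique / complete graph.) -/
def GPseudoclique {D : Type*} [CommRing D] (τ : D → D → Prop) (x : D) : Prop :=
  ∀ a b, GVert τ x a → GVert τ x b → ¬ Associated a b → GAdj τ x a b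

/-- `Diam(G_τ(x)) ≤ 1`: any two vertices are equal (associated) or adjacent. -/
def GDiamLeOne {D : Type*} [CommRing D] (τ : D → D → Prop) (x : D) : Prop :=
  ∀ a b, GVert τ x a → GVert τ x b → Associated a b ∨ GAdj τ x a b

/-- `G_τ(x)` has finitely many vertices (up to associates). -/
def GVertFinite {D : Type*} [CommRing D] (τ : D → D → Prop) (x : D) : Prop :=
  ∃ s : Finset D, ∀ a, GVert τ x a → ∃ c ∈ s, Associated a c

/-- The vertex `a` of `G_τ(x)` has finite degree: finitely many adjacent vertices
up to associates (loops not counted). -/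
def GDegFinite {D : Type*} [CommRing D] (τ : D → D → Prop) (x a : D) : Prop :=
  ∃ s : Finset D, ∀ b, GAdj τ x a b → ∃ c ∈ s, Associated b c

/-- The vertex `a` of `G_τ(x)` carries finitely many loops: there is a uniform bound on
the number of occurrences of associates of `a` in τ-atomic factorizations of `x`. -/
def GLoopsFinite {D : Type*} [CommRing D] (τ : D → D → Prop) (x a : D) : Prop :=
  ∃ N : ℕ, ∀ l m : List D, TauAtomicFact τ l x → m.Sublist l →
    (∀ b ∈ m, Associated a b) → m.length ≤ N

/-- `D` satisfies τ-ACCP. -/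
def TauACCP {D : Type*} [CommRing D] (τ : D → D → Prop) : Prop :=
  ∀ a : ℕ → D, (∀ i, TauDvd τ (a (i + 1)) (a i)) →
    ∃ N, ∀ i, N ≤ i → Associated (a i) (a N)

/-- `D` is a τ-UFD. -/
def TauUFD {D : Type*} [CommRing D] (τ : D → D → Prop) : Prop :=
  TauAtomic τ ∧ ∀ (x : D) (l₁ l₂ : List D), TauAtomicFact τ l₁ x → TauAtomicFact τ l₂ x →
    Multiset.Rel Associated (l₁ : Multiset D) (l₂ : Multiset D)

/-- `D` is a τ-FFD: each nonzero nonunit has only finitely many τ-factorizations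
up to rearrangement and associates. -/
def TauFFD {D : Type*} [CommRing D] (τ : D → D → Prop) : Prop :=
  ∀ x : D, NzNonunit x → ∃ S : Finset (Multiset D),
    ∀ l : List D, TauFact τ l x → ∃ m ∈ S, Multiset.Rel Associated (l : Multiset D) m

/-- `D` is a τ-WFFD: each nonzero nonunit has finitely many τ-divisors up to associates. -/
def TauWFFD {D : Type*} [CommRing D] (τ : D → D → Prop) : Prop :=
  ∀ x : D, NzNonunit x → ∃ s : Finset D,
    ∀ b, TauDvd τ b x → ∃ c ∈ s, Associated b c

/-- `D` is a τ-idf domain: each nonzero nonunit has finitely many τ-irreducible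
τ-divisors up to associates. -/
def TauIdf {D : Type*} [CommRing D] (τ : D → D → Prop) : Prop :=
  ∀ x : D, NzNonunit x → ∃ s : Finset D,
    ∀ b, TauIrred τ b → TauDvd τ b x → ∃ c ∈ s, Associated b c

/-!
A τ-FFD bounds the lengths of the τ-factorizations of `x` and has finitely many τ-divisors of
`x` up to associates, so `G_τ(x)` has finitely many vertices and loops. Conversely, finitely many
vertices with finitely many loops each bound the length of every τ-atomic factorization of `x`.
Refining a τ-factorization of `x` factor by factor into τ-atoms gives a τ-atomic factorization of
`x` (refinability), so the same bound holds for all τ-factorizations, and every τ-divisor of `x` is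
associated to a product of at most that many vertex representatives. A factorization is then, up
to associates, a bounded multiset drawn from a finite set, and there are finitely many of those.
-/

namespace Multiset

variable {α β : Type*}

theorem exists_rel_le_nsmul {r : α → β → Prop} (t : Finset β) (M : ℕ) (s : Multiset α)
    (hcard : card s ≤ M) (h : ∀ a ∈ s, ∃ b ∈ t, r a b) : ∃ m ≤ M • t.val, Rel r s m := by
  induction s using Multiset.induction_on generalizing M with
  | empty => exact ⟨0, zero_le _, Rel.zero⟩
  | cons a s ih =>
    cases M with
    | zero => simp at hcard
    | succ M =>
      obtain ⟨b, hbt, hab⟩ := h a (mem_cons_self a s)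
      obtain ⟨m, hm, hsm⟩ := ih M (by simpa using hcard) fun a' ha' =>
        h a' (mem_cons_of_mem ha')
      refine ⟨b ::ₘ m, ?_, hsm.cons hab⟩
      rw [succ_nsmul', ← singleton_add]
      exact add_le_add (singleton_le.mpr hbt) hm

theorem Rel.associated_prod [CommMonoid α] {s t : Multiset α} (h : Rel Associated s t) :
    Associated s.prod t.prod := by
  rw [← Associates.mk_eq_mk_iff_associated, ← Associates.prod_mk, ← Associates.prod_mk,
    Associates.rel_associated_iff_map_eq_map.mp h]

end Multiset

namespace List

variable {α β : Type*}

theorem length_le_sum_length_filter (s : Finset β) (p : β → α → Bool) (l : List α)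
    (h : ∀ a ∈ l, ∃ c ∈ s, p c a) : l.length ≤ ∑ c ∈ s, (l.filter (p c)).length := by
  induction l with
  | nil => simp
  | cons a l ih =>
    obtain ⟨c, hcs, hca⟩ := h a mem_cons_self
    have hsplit : ∀ c, ((a :: l).filter (p c)).length =
        (l.filter (p c)).length + if p c a then 1 else 0 := by
      intro c
      by_cases hc : p c a <;> simp [hc]
    have hc : (if p c a then 1 else 0) ≤ ∑ c ∈ s, if p c a then 1 else 0 :=
      Finset.single_le_sum (f := fun c => if p c a then 1 else 0) (fun _ _ => Nat.zero_le _) hcs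
    rw [Finset.sum_congr rfl fun c _ => hsplit c, Finset.sum_add_distrib, length_cons]
    simp only [hca, if_true] at hc
    have := ih fun b hb => h b (mem_cons_of_mem a hb)
    omega

theorem length_le_length_flatten_map {l : List α} {g : α → List β} (h : ∀ a ∈ l, g a ≠ []) :
    l.length ≤ (l.map g).flatten.length := by
  have := length_le_sum_of_one_le (l.map (length ∘ g))
    (by simpa [Nat.one_le_iff_ne_zero] using h)
  simpa [length_flatten, map_map] using this

end List

section TauFactorization

variable {D : Type*} [CommRing D] {τ : D → D → Prop} {x : D}

theorem TauFact.associated_prod {l : List D} (hl : TauFact τ l x) : Associated l.prod x := by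
  obtain ⟨u, hu⟩ := hl.2.2.2
  exact ⟨u, by rw [mul_comm]; exact hu.symm⟩

theorem TauAtomicFact.gVert_of_mem {l : List D} (hl : TauAtomicFact τ l x) {a : D}
    (ha : a ∈ l) : GVert τ x a :=
  ⟨hl.2 a ha, l, hl.1, ha⟩

theorem TauFact.tauAtomicFact_flatten_map (href : TauRefinable τ) {l : List D}
    (hl : TauFact τ l x) {g : D → List D} (hg : ∀ b ∈ l, TauAtomicFact τ (g b) b) :
    TauAtomicFact τ (l.map g).flatten x := by
  refine ⟨href x l _ hl ?_, fun a ha => ?_⟩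
  · rw [List.forall₂_map_right_iff, List.forall₂_same]
    exact fun b hb => (hg b hb).1
  · obtain ⟨_, hm, ham⟩ := List.mem_flatten.mp ha
    obtain ⟨b, hb, rfl⟩ := List.mem_map.mp hm
    exact (hg b hb).2 a ham

theorem gLoopsFinite_of_length_le {N : ℕ} (hN : ∀ l, TauAtomicFact τ l x → l.length ≤ N)
    (a : D) : GLoopsFinite τ x a :=
  ⟨N, fun l _ hl hml _ => hml.length_le.trans (hN l hl)⟩

theorem TauFFD.exists_length_le (hffd : TauFFD τ) (hx : NzNonunit x) :
    ∃ N, ∀ l, TauFact τ l x → l.length ≤ N := by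
  obtain ⟨S, hS⟩ := hffd x hx
  refine ⟨S.sup Multiset.card, fun l hl => ?_⟩
  obtain ⟨m, hmS, hlm⟩ := hS l hl
  calc l.length = Multiset.card m := Multiset.card_eq_card_of_rel hlm
    _ ≤ S.sup Multiset.card := Finset.le_sup hmS

open Classical in
theorem TauFFD.gVertFinite (hffd : TauFFD τ) (hx : NzNonunit x) : GVertFinite τ x := by
  obtain ⟨S, hS⟩ := hffd x hx
  refine ⟨S.biUnion Multiset.toFinset, ?_⟩
  rintro a ⟨-, l, hl, hal⟩
  obtain ⟨m, hmS, hlm⟩ := hS l hl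
  obtain ⟨c, hcm, hac⟩ := Multiset.exists_mem_of_rel_of_mem hlm (Multiset.mem_coe.mpr hal)
  exact ⟨c, Finset.mem_biUnion.mpr ⟨m, hmS, Multiset.mem_toFinset.mpr hcm⟩, hac⟩

/-- An element not associated to any vertex has no loops, since every factor of a τ-atomic
factorization of `x` is a vertex. -/
theorem gLoopsFinite_of_forall_gVert (h : ∀ a, GVert τ x a → GLoopsFinite τ x a) (c : D) :
    GLoopsFinite τ x c := by
  by_cases hc : ∃ a, GVert τ x a ∧ Associated a c
  · obtain ⟨a, ha, hac⟩ := hc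
    obtain ⟨N, hN⟩ := h a ha
    exact ⟨N, fun l m hl hml hm => hN l m hl hml fun b hb => hac.trans (hm b hb)⟩
  · refine ⟨0, fun l m hl hml hm => ?_⟩
    rcases m with _ | ⟨b, m⟩
    · rfl
    · exact absurd ⟨b, hl.gVert_of_mem (hml.subset List.mem_cons_self),
        (hm b List.mem_cons_self).symm⟩ hc

open Classical in
theorem exists_tauAtomicFact_length_le (hfin : GVertFinite τ x)
    (hloops : ∀ c, GLoopsFinite τ x c) :
    ∃ M, ∀ l, TauAtomicFact τ l x → l.length ≤ M := by
  obtain ⟨s, hs⟩ := hfin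
  choose N hN using hloops
  refine ⟨∑ c ∈ s, N c, fun l hl => ?_⟩
  calc l.length ≤ ∑ c ∈ s, (l.filter fun b => decide (Associated c b)).length :=
        List.length_le_sum_length_filter s _ l fun b hb => by
          obtain ⟨c, hcs, hbc⟩ := hs b (hl.gVert_of_mem hb)
          exact ⟨c, hcs, decide_eq_true hbc.symm⟩
    _ ≤ ∑ c ∈ s, N c := Finset.sum_le_sum fun c _ =>
        hN c l _ hl List.filter_sublist fun b hb => of_decide_eq_true (List.mem_filter.mp hb).2

theorem length_le_of_tauAtomicFact_length_le (href : TauRefinable τ) (hatomic : TauAtomic τ)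
    {M : ℕ} (hM : ∀ l, TauAtomicFact τ l x → l.length ≤ M) {l : List D} (hl : TauFact τ l x) :
    l.length ≤ M := by
  choose! g hg using hatomic
  have hgl := hl.tauAtomicFact_flatten_map href fun b hb => hg b (hl.2.1 b hb)
  exact (List.length_le_length_flatten_map fun b hb => (hg b (hl.2.1 b hb)).1.1).trans
    (hM _ hgl)

open Classical in
theorem exists_finset_associated_of_tauDvd (href : TauRefinable τ) (hatomic : TauAtomic τ)
    (hfin : GVertFinite τ x) {M : ℕ} (hM : ∀ l, TauAtomicFact τ l x → l.length ≤ M) :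
    ∃ t : Finset D, ∀ b, TauDvd τ b x → ∃ c ∈ t, Associated b c := by
  obtain ⟨s, hs⟩ := hfin
  choose! g hg using hatomic
  refine ⟨((M • s.val).powerset.toFinset).image Multiset.prod, ?_⟩
  rintro b ⟨l, hl, hbl⟩
  have hgl := hl.tauAtomicFact_flatten_map href fun b hb => hg b (hl.2.1 b hb)
  have hsub : (g b).Sublist (l.map g).flatten :=
    List.sublist_flatten_of_mem (List.mem_map_of_mem hbl)
  obtain ⟨m, hm, hbm⟩ := Multiset.exists_rel_le_nsmul s M (g b : Multiset D)
    (hsub.length_le.trans (hM _ hgl)) fun a ha => hs a (hgl.gVert_of_mem (hsub.subset ha))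
  refine ⟨m.prod, Finset.mem_image.mpr ⟨m, by simpa using hm, rfl⟩, ?_⟩
  exact (hg b (hl.2.1 b hbl)).1.associated_prod.symm.trans
    (by simpa using hbm.associated_prod)

open Classical in
theorem tauFFD_of_gVertFinite_of_gLoopsFinite (href : TauRefinable τ) (hatomic : TauAtomic τ)
    (hG : ∀ x : D, NzNonunit x → GVertFinite τ x ∧ ∀ a, GVert τ x a → GLoopsFinite τ x a) :
    TauFFD τ := by
  intro x hx
  obtain ⟨hfin, hloops⟩ := hG x hx
  obtain ⟨M, hM⟩ := exists_tauAtomicFact_length_le hfin (gLoopsFinite_of_forall_gVert hloops)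
  obtain ⟨t, ht⟩ := exists_finset_associated_of_tauDvd href hatomic hfin hM
  refine ⟨(M • t.val).powerset.toFinset, fun l hl => ?_⟩
  obtain ⟨m, hm, hlm⟩ := Multiset.exists_rel_le_nsmul t M (l : Multiset D)
    (length_le_of_tauAtomicFact_length_le href hatomic hM hl) fun b hb => ht b ⟨l, hl, hb⟩
  exact ⟨m, by simpa using hm, hlm⟩

end TauFactorization

theorem stmt10_general {D : Type*} [CommRing D] (τ : D → D → Prop)
    (href : TauRefinable τ) (hatomic : TauAtomic τ) :
    TauFFD τ ↔
      ∀ x : D, NzNonunit x →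
        GVertFinite τ x ∧ ∀ a, GVert τ x a → GLoopsFinite τ x a := by
  refine ⟨fun hffd x hx => ⟨hffd.gVertFinite hx, fun a _ => ?_⟩,
    tauFFD_of_gVertFinite_of_gLoopsFinite href hatomic⟩
  obtain ⟨N, hN⟩ := hffd.exists_length_le hx
  exact gLoopsFinite_of_length_le (fun l hl => hN l hl.1) a

theorem stmt10 {D : Type*} [CommRing D] [IsDomain D] (τ : D → D → Prop)
    (hsym : TauSymm τ) (href : TauRefinable τ) (hap : TauAssocPres τ)
    (hatomic : TauAtomic τ) :
    TauFFD τ ↔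
      ∀ x : D, NzNonunit x →
        GVertFinite τ x ∧ ∀ a, GVert τ x a → GLoopsFinite τ x a :=
  stmt10_general τ href hatomic
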